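/- arXiv:2008.00676 — 2 statements merged into one kernel-verified Lean document; each statement's English description precedes it below -/
import Mathlib

section
/- Let f ∈ F_d^cm be completely monotone with f(r) = ∫_0^∞ e^{-rt} ρ_f(t) dt where ρ_f ≥ 0 is increasing on (0,∞). Let K ⊂ N \ {1}, a_k ≥ 0 for k ∈ K with Σ_{k∈K} a_k/k² ≤ 1. Then f_κ(r) := f(r) − Σ_{k∈K} a_k f(k² r) is completely monotone on (0,∞). -/
/-!
A Laplace transform `r ↦ ∫₀^∞ e^{-rt} μ(t) dt` of a nonnegative density is completely monotone:
differentiating under the integral sign, its `n`-th derivative is the transform of `(-t)ⁿ μ(t)`.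
The substitution `t ↦ k² t` shows that `f(k² r)` is the transform of `k⁻² ρ(t / k²)`, so `f_κ`
is the transform of `ρ(t) - ∑ (a_k / k²) ρ(t / k²)`. As `ρ` is increasing and `k² ≥ 1`, this
density is at least `(1 - ∑ a_k / k²) ρ(t) ≥ 0`.
-/

open MeasureTheory

def CompletelyMonotoneOn (g : ℝ → ℝ) : Prop :=
  ∀ (n : ℕ) (r : ℝ), 0 < r → 0 ≤ (-1 : ℝ) ^ n * iteratedDeriv n g r

open Set Filter Topology

theorem CompletelyMonotoneOn.congr {g h : ℝ → ℝ} (hg : CompletelyMonotoneOn g)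
    (hgh : EqOn g h (Ioi 0)) : CompletelyMonotoneOn h := by
  intro n r hr
  rw [← (eventuallyEq_of_mem (Ioi_mem_nhds hr) hgh).iteratedDeriv_eq n]
  exact hg n r hr

theorem mul_exp_neg_mul_le {r : ℝ} (hr : 0 < r) (t : ℝ) :
    t * Real.exp (-(r * t)) ≤ 2 / r * Real.exp (-(r / 2 * t)) := by
  have hlin : t ≤ 2 / r * Real.exp (r / 2 * t) := by
    have := Real.add_one_le_exp (r / 2 * t)
    rw [div_mul_eq_mul_div, le_div_iff₀ hr]
    nlinarith
  calc t * Real.exp (-(r * t))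
      ≤ 2 / r * Real.exp (r / 2 * t) * Real.exp (-(r * t)) := by gcongr
    _ = 2 / r * Real.exp (-(r / 2 * t)) := by rw [mul_assoc, ← Real.exp_add]; ring_nf

noncomputable def laplaceTransform (μ : ℝ → ℝ) (r : ℝ) : ℝ :=
  ∫ t in Ioi 0, Real.exp (-(r * t)) * μ t

def LaplaceIntegrable (μ : ℝ → ℝ) : Prop :=
  ∀ r > (0 : ℝ), IntegrableOn (fun t => Real.exp (-(r * t)) * μ t) (Ioi 0)

namespace LaplaceIntegrable

variable {μ ν : ℝ → ℝ}

theorem aestronglyMeasurable (h : LaplaceIntegrable μ) :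
    AEStronglyMeasurable μ (volume.restrict (Ioi 0)) := by
  refine ((h 1 one_pos).aestronglyMeasurable.mul
    (Real.continuous_exp.aestronglyMeasurable (μ := volume.restrict (Ioi 0)))).congr
    (Eventually.of_forall fun t => ?_)
  simp only [one_mul, Pi.mul_apply]
  rw [mul_right_comm, ← Real.exp_add, neg_add_cancel, Real.exp_zero, one_mul]

theorem mono (h : LaplaceIntegrable μ) (hν : AEStronglyMeasurable ν (volume.restrict (Ioi 0)))
    (hle : ∀ t ∈ Ioi 0, ‖ν t‖ ≤ ‖μ t‖) : LaplaceIntegrable ν := by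
  intro r hr
  refine Integrable.mono (h r hr) (by fun_prop) ?_
  filter_upwards [ae_restrict_mem measurableSet_Ioi] with t ht
  rw [norm_mul, norm_mul]
  exact mul_le_mul_of_nonneg_left (hle t ht) (norm_nonneg _)

theorem const_mul (h : LaplaceIntegrable μ) (c : ℝ) : LaplaceIntegrable (fun t => c * μ t) :=
  fun r hr => IntegrableOn.congr_fun ((h r hr).const_mul c) (fun _ _ => mul_left_comm _ _ _)
    measurableSet_Ioi

theorem sub (hμ : LaplaceIntegrable μ) (hν : LaplaceIntegrable ν) :
    LaplaceIntegrable (μ - ν) := fun r hr => by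
  refine ((hμ r hr).sub (hν r hr)).congr_fun (fun t _ => ?_) measurableSet_Ioi
  simp only [Pi.sub_apply, mul_sub]

theorem neg_mul (h : LaplaceIntegrable μ) : LaplaceIntegrable (fun t => -t * μ t) := by
  intro r hr
  have hμ := h.aestronglyMeasurable
  refine ((h (r / 2) (by positivity)).norm.const_mul (2 / r)).mono' (by fun_prop) ?_
  filter_upwards [ae_restrict_mem measurableSet_Ioi] with t (ht : 0 < t)
  calc ‖Real.exp (-(r * t)) * (-t * μ t)‖ = t * Real.exp (-(r * t)) * |μ t| := by
        rw [Real.norm_eq_abs, abs_mul, abs_mul, abs_neg, abs_of_pos ht, Real.abs_exp]; ring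
    _ ≤ 2 / r * Real.exp (-(r / 2 * t)) * |μ t| :=
        mul_le_mul_of_nonneg_right (mul_exp_neg_mul_le hr t) (abs_nonneg _)
    _ = 2 / r * ‖Real.exp (-(r / 2 * t)) * μ t‖ := by
        rw [Real.norm_eq_abs, abs_mul, Real.abs_exp, mul_assoc]

theorem comp_div (h : LaplaceIntegrable μ) {c : ℝ} (hc : 0 < c) :
    LaplaceIntegrable (fun t => μ (t / c)) := by
  intro r hr
  have := (integrableOn_Ioi_comp_mul_left_iff (fun t => Real.exp (-(c * r * t)) * μ t) 0
    (inv_pos.2 hc)).2 (by simpa using h (c * r) (by positivity))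
  refine this.congr_fun (fun t _ => ?_) measurableSet_Ioi
  field_simp

end LaplaceIntegrable

variable {μ ν : ℝ → ℝ}

theorem laplaceTransform_sub {r : ℝ} (hμ : LaplaceIntegrable μ) (hν : LaplaceIntegrable ν)
    (hr : 0 < r) : laplaceTransform (μ - ν) r = laplaceTransform μ r - laplaceTransform ν r := by
  simp only [laplaceTransform, Pi.sub_apply, mul_sub]
  exact integral_sub (hμ r hr) (hν r hr)

theorem laplaceTransform_comp_div (μ : ℝ → ℝ) {c : ℝ} (hc : 0 < c) (r : ℝ) :
    laplaceTransform (fun t => μ (t / c)) r = c * laplaceTransform μ (c * r) := by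
  have := integral_comp_mul_left_Ioi (fun t => Real.exp (-(c * r * t)) * μ t) 0 (inv_pos.2 hc)
  rw [mul_zero, inv_inv, smul_eq_mul] at this
  rw [laplaceTransform, laplaceTransform, ← this]
  refine setIntegral_congr_fun measurableSet_Ioi fun t _ => ?_
  field_simp

theorem hasDerivAt_laplaceTransform (h : LaplaceIntegrable μ) {r : ℝ} (hr : 0 < r) :
    HasDerivAt (laplaceTransform μ) (laplaceTransform (fun t => -t * μ t) r) r := by
  have hμ := h.aestronglyMeasurable
  refine (hasDerivAt_integral_of_dominated_loc_of_deriv_le (μ := volume.restrict (Ioi 0))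
    (F := fun x t => Real.exp (-(x * t)) * μ t)
    (F' := fun x t => Real.exp (-(x * t)) * (-t * μ t))
    (bound := fun t => ‖Real.exp (-(r / 2 * t)) * (-t * μ t)‖)
    (Ioi_mem_nhds (half_lt_self hr)) (Eventually.of_forall fun x => by fun_prop) (h r hr)
    (by fun_prop) ?_ (h.neg_mul (r / 2) (by positivity)).norm ?_).2
  · filter_upwards [ae_restrict_mem measurableSet_Ioi] with t (ht : 0 < t) x (hx : r / 2 < x)
    rw [norm_mul, norm_mul (Real.exp _)]
    gcongr
    simp only [Real.norm_eq_abs, Real.abs_exp, Real.exp_le_exp]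
    nlinarith
  · refine Eventually.of_forall fun t x _ => ?_
    simpa only [Pi.neg_apply, mul_assoc] using
      (hasDerivAt_mul_const t).neg.exp.mul_const (μ t)

theorem iteratedDeriv_laplaceTransform (n : ℕ) (h : LaplaceIntegrable μ) {r : ℝ} (hr : 0 < r) :
    iteratedDeriv n (laplaceTransform μ) r = laplaceTransform (fun t => (-t) ^ n * μ t) r := by
  induction n generalizing μ with
  | zero => simp
  | succ n ih =>
    have hderiv : deriv (laplaceTransform μ) =ᶠ[𝓝 r] laplaceTransform (fun t => -t * μ t) :=
      eventually_of_mem (Ioi_mem_nhds hr) fun x hx => (hasDerivAt_laplaceTransform h hx).deriv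
    rw [iteratedDeriv_succ', hderiv.iteratedDeriv_eq, ih h.neg_mul]
    simp only [pow_succ, mul_assoc]

theorem completelyMonotoneOn_laplaceTransform (h : LaplaceIntegrable μ)
    (hμ : ∀ t ∈ Ioi 0, 0 ≤ μ t) : CompletelyMonotoneOn (laplaceTransform μ) := by
  intro n r hr
  rw [iteratedDeriv_laplaceTransform n h hr, laplaceTransform, ← integral_const_mul]
  refine setIntegral_nonneg measurableSet_Ioi fun t (ht : 0 < t) => ?_
  have hsign : (-1 : ℝ) ^ n * (-t) ^ n = t ^ n := by rw [← mul_pow, neg_one_mul, neg_neg]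
  have := hμ t ht
  calc (0 : ℝ) ≤ Real.exp (-(r * t)) * (t ^ n * μ t) := by positivity
    _ = _ := by rw [← hsign]; ring

theorem MonotoneOn.apply_div_le {ρ : ℝ → ℝ} (hρ : MonotoneOn ρ (Ioi 0)) {t c : ℝ} (ht : 0 < t)
    (hc : 1 ≤ c) : ρ (t / c) ≤ ρ t :=
  hρ (div_pos ht (one_pos.trans_le hc)) ht (div_le_self ht.le hc)

section ScaledSum

variable {ι : Type*} {ρ : ℝ → ℝ} {w s : ι → ℝ}

theorem summable_mul_apply_div (hρ0 : ∀ t ∈ Ioi 0, 0 ≤ ρ t) (hρ : MonotoneOn ρ (Ioi 0))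
    (hw0 : ∀ i, 0 ≤ w i) (hw : Summable w) (hs : ∀ i, 1 ≤ s i) {t : ℝ} (ht : 0 < t) :
    Summable fun i => w i * ρ (t / s i) :=
  (hw.mul_right (ρ t)).of_nonneg_of_le
    (fun i => mul_nonneg (hw0 i) (hρ0 _ (div_pos ht (one_pos.trans_le (hs i)))))
    (fun i => mul_le_mul_of_nonneg_left (hρ.apply_div_le ht (hs i)) (hw0 i))

theorem tsum_mul_apply_div_le (hρ0 : ∀ t ∈ Ioi 0, 0 ≤ ρ t) (hρ : MonotoneOn ρ (Ioi 0))
    (hw0 : ∀ i, 0 ≤ w i) (hw : Summable w) (hs : ∀ i, 1 ≤ s i) {t : ℝ} (ht : 0 < t) :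
    ∑' i, w i * ρ (t / s i) ≤ (∑' i, w i) * ρ t := by
  rw [← tsum_mul_right]
  exact (summable_mul_apply_div hρ0 hρ hw0 hw hs ht).tsum_le_tsum
    (fun i => mul_le_mul_of_nonneg_left (hρ.apply_div_le ht (hs i)) (hw0 i)) (hw.mul_right _)

theorem monotoneOn_tsum_mul_apply_div (hρ0 : ∀ t ∈ Ioi 0, 0 ≤ ρ t) (hρ : MonotoneOn ρ (Ioi 0))
    (hw0 : ∀ i, 0 ≤ w i) (hw : Summable w) (hs : ∀ i, 1 ≤ s i) :
    MonotoneOn (fun t => ∑' i, w i * ρ (t / s i)) (Ioi 0) := by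
  intro t (ht : 0 < t) u (hu : 0 < u) htu
  have hs0 i : 0 < s i := one_pos.trans_le (hs i)
  refine (summable_mul_apply_div hρ0 hρ hw0 hw hs ht).tsum_le_tsum (fun i => ?_)
    (summable_mul_apply_div hρ0 hρ hw0 hw hs hu)
  exact mul_le_mul_of_nonneg_left (hρ (div_pos ht (hs0 i)) (div_pos hu (hs0 i))
    (div_le_div_of_nonneg_right htu (hs0 i).le)) (hw0 i)

theorem laplaceIntegrable_tsum_mul_apply_div (hint : LaplaceIntegrable ρ)
    (hρ0 : ∀ t ∈ Ioi 0, 0 ≤ ρ t) (hρ : MonotoneOn ρ (Ioi 0)) (hw0 : ∀ i, 0 ≤ w i)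
    (hw : Summable w) (hs : ∀ i, 1 ≤ s i) :
    LaplaceIntegrable (fun t => ∑' i, w i * ρ (t / s i)) := by
  refine (hint.const_mul (∑' i, w i)).mono (aemeasurable_restrict_of_monotoneOn measurableSet_Ioi
    (monotoneOn_tsum_mul_apply_div hρ0 hρ hw0 hw hs)).aestronglyMeasurable fun t (ht : 0 < t) => ?_
  have hsum_nonneg : 0 ≤ ∑' i, w i * ρ (t / s i) :=
    tsum_nonneg fun i => mul_nonneg (hw0 i) (hρ0 _ (div_pos ht (one_pos.trans_le (hs i))))
  rw [Real.norm_of_nonneg hsum_nonneg,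
    Real.norm_of_nonneg (mul_nonneg (tsum_nonneg hw0) (hρ0 t ht))]
  exact tsum_mul_apply_div_le hρ0 hρ hw0 hw hs ht

theorem laplaceTransform_tsum_mul_apply_div [Countable ι] (hint : LaplaceIntegrable ρ)
    (hρ0 : ∀ t ∈ Ioi 0, 0 ≤ ρ t) (hρ : MonotoneOn ρ (Ioi 0)) (hw0 : ∀ i, 0 ≤ w i)
    (hw : Summable w) (hs : ∀ i, 1 ≤ s i) {r : ℝ} (hr : 0 < r) :
    laplaceTransform (fun t => ∑' i, w i * ρ (t / s i)) r =
      ∑' i, w i * laplaceTransform (fun t => ρ (t / s i)) r := by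
  have hs0 i : 0 < s i := one_pos.trans_le (hs i)
  set F : ι → ℝ → ℝ := fun i t => Real.exp (-(r * t)) * (w i * ρ (t / s i))
  have hF_int i : Integrable (F i) (volume.restrict (Ioi 0)) := by
    simpa only [F, mul_left_comm _ (w i)] using ((hint.comp_div (hs0 i)) r hr).const_mul (w i)
  have hF_norm i : ∫ t in Ioi 0, ‖F i t‖ ≤ w i * ∫ t in Ioi 0, ‖Real.exp (-(r * t)) * ρ t‖ := by
    rw [← integral_const_mul]
    refine setIntegral_mono_on (hF_int i).norm ((hint r hr).norm.const_mul _) measurableSet_Ioi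
      fun t (ht : 0 < t) => ?_
    have hρt := hρ0 t ht
    have := hρ0 _ (div_pos ht (hs0 i))
    have := hw0 i
    calc ‖F i t‖ = w i * (Real.exp (-(r * t)) * ρ (t / s i)) := by
          rw [Real.norm_of_nonneg (by positivity), mul_left_comm]
      _ ≤ w i * (Real.exp (-(r * t)) * ρ t) := by gcongr; exact hρ.apply_div_le ht (hs i)
      _ = w i * ‖Real.exp (-(r * t)) * ρ t‖ := by rw [Real.norm_of_nonneg (by positivity)]
  have hF_sum : Summable fun i => ∫ t in Ioi 0, ‖F i t‖ :=
    (hw.mul_right _).of_nonneg_of_le (fun i => integral_nonneg fun _ => norm_nonneg _) hF_norm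
  calc laplaceTransform (fun t => ∑' i, w i * ρ (t / s i)) r
      = ∫ t in Ioi 0, ∑' i, F i t := by simp only [laplaceTransform, F, tsum_mul_left]
    _ = ∑' i, ∫ t in Ioi 0, F i t := (integral_tsum_of_summable_integral_norm hF_int hF_sum).symm
    _ = ∑' i, w i * laplaceTransform (fun t => ρ (t / s i)) r := by
        simp only [laplaceTransform, F, mul_left_comm _ (w _), integral_const_mul]

end ScaledSum

theorem completelyMonotone_defect_of_increasing_density_general (ρ : ℝ → ℝ)
    (hρ0 : ∀ t : ℝ, 0 ≤ ρ t) (hρmono : MonotoneOn ρ (Set.Ioi 0))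
    (hint : ∀ r > (0 : ℝ), IntegrableOn (fun t => Real.exp (-(r * t)) * ρ t) (Set.Ioi 0))
    (f : ℝ → ℝ)
    (hf : ∀ r > (0 : ℝ), f r = ∫ t in Set.Ioi (0 : ℝ), Real.exp (-(r * t)) * ρ t)
    (K : Set ℕ) (hK : ∀ k ∈ K, 2 ≤ k) (a : ℕ → ℝ) (ha : ∀ k ∈ K, 0 ≤ a k)
    (hsum : Summable fun k : K => a k / (k : ℝ) ^ 2)
    (hle : (∑' k : K, a k / (k : ℝ) ^ 2) ≤ 1) :
    CompletelyMonotoneOn (fun r => f r - ∑' k : K, a k * f ((k : ℝ) ^ 2 * r)) := by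
  have hρ0' : ∀ t ∈ Ioi 0, 0 ≤ ρ t := fun t _ => hρ0 t
  have hf' : ∀ r > 0, f r = laplaceTransform ρ r := hf
  have hsq (k : K) : 1 ≤ (k : ℝ) ^ 2 :=
    one_le_pow₀ (by exact_mod_cast (hK k k.2).trans' one_le_two)
  have hw0 (k : K) : 0 ≤ a k / (k : ℝ) ^ 2 := div_nonneg (ha k k.2) (by positivity)
  set S : ℝ → ℝ := fun t => ∑' k : K, a k / (k : ℝ) ^ 2 * ρ (t / (k : ℝ) ^ 2)
  have hS_int : LaplaceIntegrable S :=
    laplaceIntegrable_tsum_mul_apply_div hint hρ0' hρmono hw0 hsum hsq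
  have hSρ : ∀ t ∈ Ioi 0, S t ≤ ρ t := fun t ht =>
    (tsum_mul_apply_div_le hρ0' hρmono hw0 hsum hsq ht).trans (mul_le_of_le_one_left (hρ0 t) hle)
  refine (completelyMonotoneOn_laplaceTransform (μ := ρ - S) (LaplaceIntegrable.sub hint hS_int)
    fun t ht => sub_nonneg.2 (hSρ t ht)).congr fun r (hr : 0 < r) => ?_
  rw [laplaceTransform_sub hint hS_int hr,
    laplaceTransform_tsum_mul_apply_div hint hρ0' hρmono hw0 hsum hsq hr, hf' r hr]
  congr 1
  refine tsum_congr fun k => ?_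
  have hk : 0 < (k : ℝ) ^ 2 := one_pos.trans_le (hsq k)
  rw [laplaceTransform_comp_div ρ hk, hf' _ (by positivity), ← mul_assoc, div_mul_cancel₀ _ hk.ne']

/-- Let `f` be completely monotone with `f(r) = ∫_0^∞ e^{-rt} ρ(t) dt`, `ρ ≥ 0`
increasing on `(0,∞)`. Let `K ⊂ ℕ \ {1}`, `a_k ≥ 0` with `∑ a_k/k² ≤ 1`. Then
`f_κ(r) = f(r) - ∑_{k∈K} a_k f(k² r)` is completely monotone on `(0,∞)`. -/
theorem completelyMonotone_defect_of_increasing_density (ρ : ℝ → ℝ)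
    (hρ0 : ∀ t : ℝ, 0 ≤ ρ t) (hρmono : MonotoneOn ρ (Set.Ioi 0))
    (hint : ∀ r > (0 : ℝ), IntegrableOn (fun t => Real.exp (-(r * t)) * ρ t) (Set.Ioi 0))
    (f : ℝ → ℝ) (hcm : CompletelyMonotoneOn f)
    (hf : ∀ r > (0 : ℝ), f r = ∫ t in Set.Ioi (0 : ℝ), Real.exp (-(r * t)) * ρ t)
    (K : Set ℕ) (hK : ∀ k ∈ K, 2 ≤ k) (a : ℕ → ℝ) (ha : ∀ k ∈ K, 0 ≤ a k)
    (hsum : Summable fun k : K => a k / (k : ℝ) ^ 2)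
    (hle : (∑' k : K, a k / (k : ℝ) ^ 2) ≤ 1) :
    CompletelyMonotoneOn (fun r => f r - ∑' k : K, a k * f ((k : ℝ) ^ 2 * r)) :=
  completelyMonotone_defect_of_increasing_density_general ρ hρ0 hρmono hint f hf K hK a ha hsum hle
end

section
/- Let d ≥ 2, x₂ > x₁ > d/2, β₁, β₂ > 0, α > 0 with β₂/α^{x₂−x₁} ≥ β₁. Define g̃(y) := (β₂/α^{x₂−x₁}) y^{2x₂−d/2} − β₁ y^{x₂+x₁−d/2} − β₁ y^{x₂−x₁} + β₂/α^{x₂−x₁}. Then g̃(y) ≥ 0 for all y ≥ 1. -/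
/-- Key computation for high-density optimality of Lennard-Jones type potentials:
if `β₂/α^{x₂-x₁} ≥ β₁ > 0` then
`g̃(y) = (β₂/α^{x₂-x₁}) y^{2x₂-d/2} - β₁ y^{x₂+x₁-d/2} - β₁ y^{x₂-x₁} + β₂/α^{x₂-x₁} ≥ 0`
for all `y ≥ 1`. -/
theorem lennard_jones_gV_nonneg (d : ℕ) (hd : 2 ≤ d) (x₁ x₂ β₁ β₂ α : ℝ)
    (hx₁ : (d : ℝ) / 2 < x₁) (hx₁₂ : x₁ < x₂) (hβ₁ : 0 < β₁) (hβ₂ : 0 < β₂)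
    (hα : 0 < α) (h : β₁ ≤ β₂ / α ^ (x₂ - x₁)) :
    ∀ y : ℝ, 1 ≤ y →
      0 ≤ β₂ / α ^ (x₂ - x₁) * y ^ (2 * x₂ - (d : ℝ) / 2)
          - β₁ * y ^ (x₂ + x₁ - (d : ℝ) / 2) - β₁ * y ^ (x₂ - x₁)
          + β₂ / α ^ (x₂ - x₁) := by
  intro y hy
  have hy0 : (0 : ℝ) < y := lt_of_lt_of_le one_pos hy
  have hsplit : y ^ (2 * x₂ - (d : ℝ) / 2)
      = y ^ (x₂ + x₁ - (d : ℝ) / 2) * y ^ (x₂ - x₁) := by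
    rw [← Real.rpow_add hy0]; ring_nf
  have hd' : (2:ℝ) ≤ (d:ℝ) := by exact_mod_cast hd
  have hb : 1 ≤ y ^ (x₂ + x₁ - (d : ℝ) / 2) :=
    Real.one_le_rpow hy (by linarith)
  have he : 1 ≤ y ^ (x₂ - x₁) :=
    Real.one_le_rpow hy (by linarith)
  rw [hsplit]
  nlinarith [mul_nonneg (sub_nonneg.2 hb) (sub_nonneg.2 he)]
end
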